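/- arXiv:2010.13815 — 2 statements merged into one kernel-verified Lean document; each statement's English description precedes it below -/
import Mathlib

section
/- (Hironaka's formal division algorithm.) Let A be an integral domain with field of fractions 𝕂, let L be a positive linear form on ℝⁿ, and order ℕⁿ×{1,…,p} by comparing (L(α), j, α) lexicographically. Let Φ₁,…,Φ_q ∈ A⟦x₁,…,xₙ⟧ᵖ be nonzero, set (α_i,j_i) := exp Φ_i, and define the partition {Δ₁,…,Δ_q,Δ} of ℕⁿ×{1,…,p} by Δ₁ := (α₁,j₁)+ℕⁿ, Δ_i := ((α_i,j_i)+ℕⁿ) ∖ (Δ₁∪⋯∪Δ_{i−1}) for i = 2,…,q, and Δ := ℕⁿ×{1,…,p} ∖ (Δ₁∪⋯∪Δ_q). Let S be the multiplicative subset of A generated by the initial coefficients Φ_{i,(α_i,j_i)}, and let B be any subring of 𝕂 containing the localization S⁻¹A. Then for every F ∈ B⟦x⟧ᵖ there exist unique Q₁,…,Q_q ∈ B⟦x⟧ and R ∈ B⟦x⟧ᵖ such that F = Σ_{i=1}^q Q_iΦ_i + R, with (α_i,j_i)+supp Q_i ⊆ Δ_i for each i and supp R ⊆ Δ; moreover (α_i,j_i)+exp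 Q_i ≥ exp F for each i with Q_i ≠ 0, and exp R ≥ exp F if R ≠ 0. -/
/-!
Encode a candidate `(Q, R)` by one function `c` on `ℕⁿ × {1,…,p}`: `c (αᵢ + β, jᵢ)` is the
coefficient of `x^β` in `Qᵢ` on `Δᵢ`, and `c (α, j)` is that of `x^α` in `R_j` on `Δ`. Because
`exp Φᵢ = (αᵢ, jᵢ)` and the order is translation invariant, the coefficient of `∑ Qᵢ Φᵢ + R` at `d`
is `c d` times the pivot `u(d)` (the initial coefficient of `Φᵢ` if `d ∈ Δᵢ`, `1` if `d ∈ Δ`)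
plus a term depending only on the values of `c` below `d`. Since `L > 0`, every index has only
finitely many predecessors, so this triangular system has exactly one solution, obtained by
well-founded recursion. The recursion only divides by pivots, which keeps the coefficients in `B`.
Finally `c` vanishes below `exp F`: at a minimal index below `exp F` where `c` were nonzero, `F`
would have a nonzero coefficient.
-/

open Classical

/-- Index set `ℕⁿ × {1,…,p}` for coefficients of elements of `A⟦x₁,…,xₙ⟧ᵖ`. -/
abbrev Idx (n p : ℕ) := (Fin n →₀ ℕ) × Fin p

/-- Value `L(α) = Σ λ_i α_i` of a linear form on a multiindex. -/
noncomputable def Lval {n : ℕ} (L : Fin n → ℝ) (α : Fin n →₀ ℕ) : ℝ := ∑ i, L i * (α i : ℝ)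

/-- Lexicographic order on multiindices. -/
def lexLT {n : ℕ} (α β : Fin n →₀ ℕ) : Prop :=
  ∃ i : Fin n, (∀ j, j < i → α j = β j) ∧ α i < β i

/-- The total order on `ℕⁿ × {1,…,p}` comparing `(L(α), j, α)` lexicographically. -/
noncomputable def idxLT {n p : ℕ} (L : Fin n → ℝ) (a b : Idx n p) : Prop :=
  Lval L a.1 < Lval L b.1 ∨
    (Lval L a.1 = Lval L b.1 ∧ ((a.2 : ℕ) < (b.2 : ℕ) ∨ (a.2 = b.2 ∧ lexLT a.1 b.1)))

noncomputable def idxLE {n p : ℕ} (L : Fin n → ℝ) (a b : Idx n p) : Prop :=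
  idxLT L a b ∨ a = b

/-- Support of `F ∈ A⟦x⟧ᵖ`. -/
def suppV {n p : ℕ} {A : Type} [Semiring A] (F : Fin p → MvPowerSeries (Fin n) A) :
    Set (Idx n p) :=
  {d | MvPowerSeries.coeff d.1 (F d.2) ≠ 0}

/-- `d` is the initial exponent `exp F` of `F` w.r.t. the order given by `L`. -/
noncomputable def IsExpOf {n p : ℕ} {A : Type} [Semiring A] (L : Fin n → ℝ)
    (F : Fin p → MvPowerSeries (Fin n) A) (d : Idx n p) : Prop :=
  d ∈ suppV F ∧ ∀ d' ∈ suppV F, idxLE L d d'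

/-- `(α_i, j_i) + ℕⁿ`. -/
def DeltaFull {n p q : ℕ} (e : Fin q → Idx n p) (i : Fin q) : Set (Idx n p) :=
  {d | d.2 = (e i).2 ∧ ∃ β : Fin n →₀ ℕ, d.1 = (e i).1 + β}

/-- The sets `Δ_i` of Hironaka's division: `Δ_i = ((α_i,j_i) + ℕⁿ) ∖ (Δ_1 ∪ ⋯ ∪ Δ_{i−1})`. -/
def Delta {n p q : ℕ} (e : Fin q → Idx n p) (i : Fin q) : Set (Idx n p) :=
  DeltaFull e i \ ⋃ (k : Fin q) (hk : k < i), Delta e k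
termination_by i.val
decreasing_by exact hk

/-- The complementary region `Δ = ℕⁿ×{1,…,p} ∖ (Δ_1 ∪ ⋯ ∪ Δ_q)`. -/
def DeltaC {n p q : ℕ} (e : Fin q → Idx n p) : Set (Idx n p) :=
  (⋃ i : Fin q, Delta e i)ᶜ


section Order

variable {n p : ℕ}

theorem Lval_add (L : Fin n → ℝ) (α β : Fin n →₀ ℕ) :
    Lval L (α + β) = Lval L α + Lval L β := by
  simp only [Lval, Finsupp.add_apply, Nat.cast_add, mul_add, Finset.sum_add_distrib]

/-- `idxLT L` is the strict order pulled back along this injective key. -/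
noncomputable def idxKey (L : Fin n → ℝ) (a : Idx n p) :
    ℝ ×ₗ ℕ ×ₗ Lex (Fin n →₀ ℕ) :=
  toLex (Lval L a.1, toLex ((a.2 : ℕ), toLex a.1))

theorem idxKey_injective (L : Fin n → ℝ) : Function.Injective (idxKey (p := p) L) := by
  intro a b h
  simp only [idxKey, toLex_inj, Prod.mk.injEq, Fin.val_inj] at h
  exact Prod.ext h.2.2 h.2.1

theorem idxLT_iff_idxKey_lt {L : Fin n → ℝ} {a b : Idx n p} :
    idxLT L a b ↔ idxKey L a < idxKey L b := by
  simp only [idxLT, idxKey, Prod.Lex.toLex_lt_toLex, Fin.val_inj, lexLT, Finsupp.Lex.lt_iff]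
  rfl

theorem idxLE_iff_idxKey_le {L : Fin n → ℝ} {a b : Idx n p} :
    idxLE L a b ↔ idxKey L a ≤ idxKey L b := by
  rw [idxLE, idxLT_iff_idxKey_lt, le_iff_lt_or_eq, (idxKey_injective L).eq_iff]

theorem idxLT_irrefl (L : Fin n → ℝ) (a : Idx n p) : ¬ idxLT L a a := by
  simp [idxLT_iff_idxKey_lt]

theorem idxLT_trans {L : Fin n → ℝ} {a b c : Idx n p} (hab : idxLT L a b)
    (hbc : idxLT L b c) : idxLT L a c :=
  idxLT_iff_idxKey_lt.2 ((idxLT_iff_idxKey_lt.1 hab).trans (idxLT_iff_idxKey_lt.1 hbc))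

theorem idxLE_of_not_idxLT {L : Fin n → ℝ} {a b : Idx n p} (h : ¬ idxLT L b a) :
    idxLE L a b :=
  idxLE_iff_idxKey_le.2 (not_lt.1 (idxLT_iff_idxKey_lt.not.1 h))

theorem not_idxLT_of_idxLE {L : Fin n → ℝ} {a b : Idx n p} (h : idxLE L a b) :
    ¬ idxLT L b a := fun h' =>
  (idxLE_iff_idxKey_le.1 h).not_gt (idxLT_iff_idxKey_lt.1 h')

theorem idxLE.add_right {L : Fin n → ℝ} {a b : Idx n p} (h : idxLE L a b)
    (β : Fin n →₀ ℕ) : idxLE L (a.1 + β, a.2) (b.1 + β, b.2) := by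
  rw [idxLE_iff_idxKey_le] at *
  simpa [idxKey, Lval_add, Prod.Lex.toLex_le_toLex, toLex_add] using h

instance (L : Fin n → ℝ) : IsStrictOrder (Idx n p) (idxLT L) where
  irrefl := idxLT_irrefl L
  trans _ _ _ := idxLT_trans

theorem finite_setOf_Lval_le {L : Fin n → ℝ} (hL : ∀ i, 0 < L i) (C : ℝ) :
    {α : Fin n →₀ ℕ | Lval L α ≤ C}.Finite := by
  refine (Set.finite_Iic (Finsupp.equivFunOnFinite.symm fun i => ⌈C / L i⌉₊)).subset
    fun α hα => Finsupp.le_def.2 fun i => ?_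
  have hterm : L i * α i ≤ Lval L α :=
    Finset.single_le_sum (f := fun i => L i * (α i : ℝ))
      (fun j _ => mul_nonneg (hL j).le (Nat.cast_nonneg _)) (Finset.mem_univ i)
  have hαi : (α i : ℝ) ≤ C / L i := by
    rw [le_div_iff₀ (hL i), mul_comm]
    exact hterm.trans hα
  simpa using Nat.cast_le.1 (hαi.trans (Nat.le_ceil _))

theorem finite_setOf_idxLT {L : Fin n → ℝ} (hL : ∀ i, 0 < L i) (d : Idx n p) :
    {d' : Idx n p | idxLT L d' d}.Finite := by
  refine ((finite_setOf_Lval_le hL (Lval L d.1)).prod Set.finite_univ).subset fun d' h => ?_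
  rcases h with h | ⟨h, -⟩
  exacts [⟨h.le, trivial⟩, ⟨h.le, trivial⟩]

theorem wellFounded_of_finite_setOf_rel {α : Type*} {r : α → α → Prop} [IsStrictOrder α r]
    (h : ∀ b, {a | r a b}.Finite) : WellFounded r :=
  ⟨fun b => ((Set.WellFoundedOn.acc_iff_wellFoundedOn (r := r) (a := b)).out 0 2).2 <| by
    rw [Relation.transGen_eq_self]
    exact (h b).wellFoundedOn⟩

theorem idxLT_wellFounded {L : Fin n → ℝ} (hL : ∀ i, 0 < L i) :
    WellFounded (idxLT (p := p) L) :=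
  wellFounded_of_finite_setOf_rel (finite_setOf_idxLT hL)

end Order

section Delta

variable {n p q : ℕ} {e : Fin q → Idx n p} {d : Idx n p} {i k : Fin q}

theorem mem_delta_iff : d ∈ Delta e i ↔ d ∈ DeltaFull e i ∧ ∀ k < i, d ∉ Delta e k := by
  rw [Delta]
  simp only [Set.mem_sdiff, Set.mem_iUnion, not_exists]

theorem eq_of_mem_delta (hi : d ∈ Delta e i) (hk : d ∈ Delta e k) : i = k := by
  by_contra hne
  rcases lt_or_gt_of_ne hne with h | h
  exacts [(mem_delta_iff.1 hk).2 i h hi, (mem_delta_iff.1 hi).2 k h hk]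

theorem mem_deltaC_iff : d ∈ DeltaC e ↔ ∀ i, d ∉ Delta e i := by
  simp [DeltaC]

theorem add_sub_of_mem_delta (h : d ∈ Delta e i) :
    ((e i).1 + (d.1 - (e i).1), (e i).2) = d := by
  obtain ⟨hj, β, hβ⟩ := (mem_delta_iff.1 h).1
  rw [hβ, add_tsub_cancel_left, ← hβ, ← hj]

end Delta

section PowerSeries

variable {n p : ℕ}

theorem MvPowerSeries.coeff_mul_mem {σ R S : Type*} [Semiring R] [SetLike S R]
    [SubsemiringClass S R] {B : S} {f g : MvPowerSeries σ R} (hf : ∀ α, coeff α f ∈ B)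
    (hg : ∀ α, coeff α g ∈ B) (α : σ →₀ ℕ) : coeff α (f * g) ∈ B := by
  classical
  rw [MvPowerSeries.coeff_mul]
  exact sum_mem fun x _ => mul_mem (hf x.1) (hg x.2)

theorem suppV_map {A A' : Type} [Semiring A] [Semiring A'] {f : A →+* A'}
    (hf : Function.Injective f) (F : Fin p → MvPowerSeries (Fin n) A) :
    suppV (fun j => MvPowerSeries.map f (F j)) = suppV F := by
  ext d
  simp [suppV, MvPowerSeries.coeff_map, map_ne_zero_iff f hf]

theorem IsExpOf.map {A A' : Type} [Semiring A] [Semiring A'] {f : A →+* A'}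
    (hf : Function.Injective f) {L : Fin n → ℝ} {F : Fin p → MvPowerSeries (Fin n) A}
    {d : Idx n p} (h : IsExpOf L F d) : IsExpOf L (fun j => MvPowerSeries.map f (F j)) d := by
  rwa [IsExpOf, suppV_map hf]

end PowerSeries

namespace HironakaDivision

open MvPowerSeries Finset.HasAntidiagonal

section CommRing

variable {n p q : ℕ} {K : Type} [CommRing K]
  (Ψ : Fin q → Fin p → MvPowerSeries (Fin n) K) (e : Fin q → Idx n p)

noncomputable def quot (c : Idx n p → K) (i : Fin q) : MvPowerSeries (Fin n) K :=
  fun β => if ((e i).1 + β, (e i).2) ∈ Delta e i then c ((e i).1 + β, (e i).2) else 0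

noncomputable def rem (c : Idx n p → K) (j : Fin p) : MvPowerSeries (Fin n) K :=
  fun α => if (α, j) ∈ DeltaC e then c (α, j) else 0

noncomputable def truncBelow (L : Fin n → ℝ) (d : Idx n p) (c : Idx n p → K) :
    Idx n p → K :=
  fun d' => if idxLT L d' d then c d' else 0

noncomputable def expand (c : Idx n p → K) (j : Fin p) : MvPowerSeries (Fin n) K :=
  ∑ i, quot e c i * Ψ i j + rem e c j

noncomputable def pivot (d : Idx n p) : K :=
  if h : ∃ i, d ∈ Delta e i then coeff (e h.choose).1 (Ψ h.choose (e h.choose).2) else 1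

noncomputable def ofQuotRem (Q : Fin q → MvPowerSeries (Fin n) K)
    (R : Fin p → MvPowerSeries (Fin n) K) (d : Idx n p) : K :=
  if h : ∃ i, d ∈ Delta e i then coeff (d.1 - (e h.choose).1) (Q h.choose)
  else coeff d.1 (R d.2)

variable {Ψ e}

theorem coeff_quot (c : Idx n p → K) (i : Fin q) (β : Fin n →₀ ℕ) :
    coeff β (quot e c i) =
      if ((e i).1 + β, (e i).2) ∈ Delta e i then c ((e i).1 + β, (e i).2) else 0 :=
  rfl

theorem coeff_rem (c : Idx n p → K) (α : Fin n →₀ ℕ) (j : Fin p) :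
    coeff α (rem e c j) = if (α, j) ∈ DeltaC e then c (α, j) else 0 :=
  rfl

theorem coeff_quot_ne_zero_iff {c : Idx n p → K} {i : Fin q} {β : Fin n →₀ ℕ} :
    coeff β (quot e c i) ≠ 0 ↔
      ((e i).1 + β, (e i).2) ∈ Delta e i ∧ c ((e i).1 + β, (e i).2) ≠ 0 := by
  simp [coeff_quot]

theorem mem_suppV_rem_iff {c : Idx n p → K} {d : Idx n p} :
    d ∈ suppV (rem e c) ↔ d ∈ DeltaC e ∧ c d ≠ 0 := by
  simp [suppV, coeff_rem, Prod.mk.eta]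

theorem coeff_quot_mem {S : Type*} [SetLike S K] [AddSubmonoidClass S K] {B : S}
    {c : Idx n p → K} (hc : ∀ d, c d ∈ B) (i : Fin q) (β : Fin n →₀ ℕ) :
    coeff β (quot e c i) ∈ B := by
  rw [coeff_quot]
  split_ifs
  exacts [hc _, zero_mem B]

theorem coeff_rem_mem {S : Type*} [SetLike S K] [AddSubmonoidClass S K] {B : S}
    {c : Idx n p → K} (hc : ∀ d, c d ∈ B) (α : Fin n →₀ ℕ) (j : Fin p) :
    coeff α (rem e c j) ∈ B := by
  rw [coeff_rem]
  split_ifs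
  exacts [hc _, zero_mem B]

theorem expand_sub (c c' : Idx n p → K) :
    expand Ψ e (c - c') = expand Ψ e c - expand Ψ e c' := by
  have hquot : ∀ i, quot e (c - c') i = quot e c i - quot e c' i := fun i => by
    ext β; simp only [coeff_quot, map_sub, Pi.sub_apply]; split_ifs <;> simp
  have hrem : ∀ j, rem e (c - c') j = rem e c j - rem e c' j := fun j => by
    ext α; simp only [map_sub, coeff_rem, Pi.sub_apply]; split_ifs <;> simp
  funext j
  simp only [expand, hquot, hrem, sub_mul, Finset.sum_sub_distrib, Pi.sub_apply]
  abel

theorem pivot_of_mem_delta {d : Idx n p} {i : Fin q} (h : d ∈ Delta e i) :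
    pivot Ψ e d = coeff (e i).1 (Ψ i (e i).2) := by
  have hex : ∃ i, d ∈ Delta e i := ⟨i, h⟩
  rw [pivot, dif_pos hex, eq_of_mem_delta hex.choose_spec h]

theorem pivot_of_mem_deltaC {d : Idx n p} (h : d ∈ DeltaC e) : pivot Ψ e d = 1 := by
  rw [pivot, dif_neg (by simpa [mem_deltaC_iff] using h)]

variable {L : Fin n → ℝ} {c : Idx n p → K} {d : Idx n p}

/-- Every exponent of `Ψᵢ` is at least `(αᵢ, jᵢ)` and the order is translation invariant,
so the term `x` of the product sits at `(αᵢ + x.1, jᵢ) ≤ d`. -/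
theorem eq_of_coeff_quot_mul_ne_zero {i : Fin q} (he : IsExpOf L (Ψ i) (e i))
    (hc : ∀ d', idxLT L d' d → c d' = 0) {x : (Fin n →₀ ℕ) × (Fin n →₀ ℕ)}
    (hx : x ∈ antidiagonal d.1) (h : coeff x.1 (quot e c i) * coeff x.2 (Ψ i d.2) ≠ 0) :
    ((e i).1 + x.1, (e i).2) = d := by
  obtain ⟨-, hcx⟩ := coeff_quot_ne_zero_iff.1 (left_ne_zero_of_mul h)
  have hle := (he.2 (x.2, d.2) (right_ne_zero_of_mul h)).add_right x.1
  rw [mem_antidiagonal, add_comm] at hx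
  rw [hx] at hle
  exact hle.resolve_left fun hlt => hcx (hc _ hlt)

theorem coeff_quot_mul_of_forall_lt_eq_zero {i : Fin q} (he : IsExpOf L (Ψ i) (e i))
    (hc : ∀ d', idxLT L d' d → c d' = 0) :
    coeff d.1 (quot e c i * Ψ i d.2) =
      if d ∈ Delta e i then c d * coeff (e i).1 (Ψ i (e i).2) else 0 := by
  classical
  rw [coeff_mul]
  split_ifs with hd
  · have hpt := add_sub_of_mem_delta hd
    rw [Finset.sum_eq_single (d.1 - (e i).1, (e i).1)]
    · rw [coeff_quot, hpt, if_pos hd, ← hpt]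
    · intro x hx hne
      by_contra h
      have hxd := eq_of_coeff_quot_mul_ne_zero he hc hx h
      rw [mem_antidiagonal, ← hxd] at hx
      refine hne (Prod.ext ?_ (add_left_cancel (hx.trans (add_comm _ _))))
      simp [← hxd]
    · rw [mem_antidiagonal, add_comm]
      exact fun h => (h (congrArg Prod.fst hpt)).elim
  · refine Finset.sum_eq_zero fun x hx => by_contra fun h => hd ?_
    have hxd := eq_of_coeff_quot_mul_ne_zero he hc hx h
    rw [← hxd]
    exact (coeff_quot_ne_zero_iff.1 (left_ne_zero_of_mul h)).1

theorem coeff_expand_of_forall_lt_eq_zero (he : ∀ i, IsExpOf L (Ψ i) (e i))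
    (hc : ∀ d', idxLT L d' d → c d' = 0) :
    coeff d.1 (expand Ψ e c d.2) = c d * pivot Ψ e d := by
  simp only [expand, map_add, map_sum, coeff_quot_mul_of_forall_lt_eq_zero (he _) hc, coeff_rem,
    Prod.mk.eta]
  by_cases h : ∃ i, d ∈ Delta e i
  · obtain ⟨i, hi⟩ := h
    rw [Finset.sum_eq_single i (fun k _ hki => if_neg fun hk => hki (eq_of_mem_delta hk hi))
      (by simp), if_pos hi, if_neg (mem_deltaC_iff.not.2 fun h => h i hi), add_zero,
      pivot_of_mem_delta hi]
  · have hC : d ∈ DeltaC e := mem_deltaC_iff.2 (not_exists.1 h)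
    rw [Finset.sum_eq_zero fun i _ => if_neg (not_exists.1 h i), if_pos hC, zero_add,
      pivot_of_mem_deltaC hC, mul_one]

theorem coeff_expand_eq (he : ∀ i, IsExpOf L (Ψ i) (e i)) (c : Idx n p → K) (d : Idx n p) :
    coeff d.1 (expand Ψ e c d.2) =
      c d * pivot Ψ e d + coeff d.1 (expand Ψ e (truncBelow L d c) d.2) := by
  have h := coeff_expand_of_forall_lt_eq_zero (c := c - truncBelow L d c) (d := d) he
    fun d' hd' => by simp [truncBelow, hd']
  simp only [expand_sub, Pi.sub_apply, map_sub, truncBelow, if_neg (idxLT_irrefl L d),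
    sub_zero] at h
  linear_combination h

theorem coeff_expand_mem {S : Type*} [SetLike S K] [SubsemiringClass S K] {B : S}
    (hΨ : ∀ i j α, coeff α (Ψ i j) ∈ B) {c : Idx n p → K} (hc : ∀ d, c d ∈ B)
    (α : Fin n →₀ ℕ) (j : Fin p) : coeff α (expand Ψ e c j) ∈ B := by
  simp only [expand, map_add, map_sum]
  exact add_mem (sum_mem fun i _ => coeff_mul_mem (coeff_quot_mem hc i) (hΨ i j) α)
    (coeff_rem_mem hc α j)

theorem quot_ofQuotRem {Q : Fin q → MvPowerSeries (Fin n) K}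
    (R : Fin p → MvPowerSeries (Fin n) K)
    (hQ : ∀ i β, coeff β (Q i) ≠ 0 → ((e i).1 + β, (e i).2) ∈ Delta e i) (i : Fin q) :
    quot e (ofQuotRem e Q R) i = Q i := by
  ext β
  rw [coeff_quot]
  split_ifs with h
  · have hex : ∃ k, ((e i).1 + β, (e i).2) ∈ Delta e k := ⟨i, h⟩
    rw [ofQuotRem, dif_pos hex, eq_of_mem_delta hex.choose_spec h, add_tsub_cancel_left]
  · by_contra hne
    exact h (hQ i β (Ne.symm hne))

theorem rem_ofQuotRem (Q : Fin q → MvPowerSeries (Fin n) K)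
    {R : Fin p → MvPowerSeries (Fin n) K} (hR : suppV R ⊆ DeltaC e) (j : Fin p) :
    rem e (ofQuotRem e Q R) j = R j := by
  ext α
  rw [coeff_rem]
  split_ifs with h
  · rw [ofQuotRem, dif_neg (by simpa [mem_deltaC_iff] using h)]
  · by_contra hne
    exact h (hR (Ne.symm hne))

end CommRing

section Domain

variable {n p q : ℕ} {K : Type} [CommRing K] [IsDomain K]
  {Ψ : Fin q → Fin p → MvPowerSeries (Fin n) K} {e : Fin q → Idx n p} {L : Fin n → ℝ}

theorem pivot_ne_zero (he : ∀ i, IsExpOf L (Ψ i) (e i)) (d : Idx n p) : pivot Ψ e d ≠ 0 := by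
  by_cases h : ∃ i, d ∈ Delta e i
  · obtain ⟨i, hi⟩ := h
    rw [pivot_of_mem_delta hi]
    exact (he i).1
  · rw [pivot_of_mem_deltaC (mem_deltaC_iff.2 (not_exists.1 h))]
    exact one_ne_zero

theorem expand_injective (hL : ∀ i, 0 < L i) (he : ∀ i, IsExpOf L (Ψ i) (e i)) :
    Function.Injective (expand Ψ e) := by
  intro c c' hcc'
  by_contra hne
  obtain ⟨d, hd, hmin⟩ :=
    (idxLT_wellFounded hL).has_min {d | c d ≠ c' d} (Function.ne_iff.1 hne)
  have h := coeff_expand_of_forall_lt_eq_zero (c := c - c') (d := d) he fun d' hd' =>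
    sub_eq_zero.2 (not_not.1 fun h => hmin d' h hd')
  rw [expand_sub, hcc', sub_self, Pi.zero_apply, map_zero, eq_comm, mul_eq_zero] at h
  exact hd (sub_eq_zero.1 (h.resolve_right (pivot_ne_zero he d)))

theorem idxLE_of_expand_eq (hL : ∀ i, 0 < L i) (he : ∀ i, IsExpOf L (Ψ i) (e i))
    {c : Idx n p → K} {F : Fin p → MvPowerSeries (Fin n) K} (hcF : expand Ψ e c = F)
    {dF : Idx n p} (hF : IsExpOf L F dF) {d : Idx n p} (hd : c d ≠ 0) : idxLE L dF d := by
  refine idxLE_of_not_idxLT fun hlt => ?_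
  obtain ⟨d₀, ⟨hd₀F, hd₀⟩, hmin⟩ :=
    (idxLT_wellFounded hL).has_min {d | idxLT L d dF ∧ c d ≠ 0} ⟨d, hlt, hd⟩
  have h := coeff_expand_of_forall_lt_eq_zero (d := d₀) he fun d' hd' =>
    not_not.1 fun h => hmin d' ⟨idxLT_trans hd' hd₀F, h⟩ hd'
  rw [hcF] at h
  have hd₀F' : d₀ ∈ suppV F := by
    change coeff d₀.1 (F d₀.2) ≠ 0
    rw [h]
    exact mul_ne_zero hd₀ (pivot_ne_zero he d₀)
  exact not_idxLT_of_idxLE (hF.2 d₀ hd₀F') hd₀F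

end Domain

section Field

variable {n p q : ℕ} {K : Type} [Field K]
  {Ψ : Fin q → Fin p → MvPowerSeries (Fin n) K} {e : Fin q → Idx n p} {L : Fin n → ℝ}

theorem exists_expand_eq (hL : ∀ i, 0 < L i) (he : ∀ i, IsExpOf L (Ψ i) (e i))
    (F : Fin p → MvPowerSeries (Fin n) K) : ∃ c, expand Ψ e c = F := by
  let c : Idx n p → K := (idxLT_wellFounded hL).fix fun d rec =>
    (coeff d.1 (F d.2) -
      coeff d.1 (expand Ψ e (fun d' => if h : idxLT L d' d then rec d' h else 0) d.2)) *
      (pivot Ψ e d)⁻¹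
  have hc : ∀ d, c d =
      (coeff d.1 (F d.2) - coeff d.1 (expand Ψ e (truncBelow L d c) d.2)) * (pivot Ψ e d)⁻¹ :=
    fun d =>
    (WellFounded.fix_eq _ _ d).trans (by simp only [dite_eq_ite]; rfl)
  refine ⟨c, funext fun j => MvPowerSeries.ext fun α => ?_⟩
  have h := coeff_expand_eq he c (α, j)
  rw [hc, inv_mul_cancel_right₀ (pivot_ne_zero he _), sub_add_cancel] at h
  exact h

theorem mem_of_expand_eq (hL : ∀ i, 0 < L i) (he : ∀ i, IsExpOf L (Ψ i) (e i)) (B : Subring K)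
    (hΨ : ∀ i j α, coeff α (Ψ i j) ∈ B)
    (hpivot : ∀ i, (coeff (e i).1 (Ψ i (e i).2))⁻¹ ∈ B)
    {F : Fin p → MvPowerSeries (Fin n) K} (hF : ∀ d : Idx n p, coeff d.1 (F d.2) ∈ B)
    {c : Idx n p → K} (hcF : expand Ψ e c = F) (d : Idx n p) : c d ∈ B := by
  induction d using (idxLT_wellFounded hL).induction with
  | _ d ih =>
    have hpivotB : (pivot Ψ e d)⁻¹ ∈ B := by
      by_cases h : ∃ i, d ∈ Delta e i
      · obtain ⟨i, hi⟩ := h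
        rw [pivot_of_mem_delta hi]
        exact hpivot i
      · rw [pivot_of_mem_deltaC (mem_deltaC_iff.2 (not_exists.1 h)), inv_one]
        exact B.one_mem
    have hlow := coeff_expand_mem (e := e) (B := B) hΨ (c := truncBelow L d c)
      (fun d' => by unfold truncBelow; split_ifs with h; exacts [ih d' h, B.zero_mem]) d.1 d.2
    have h := coeff_expand_eq he c d
    rw [hcF] at h
    have hcd : c d = (coeff d.1 (F d.2) - coeff d.1 (expand Ψ e (truncBelow L d c) d.2)) *
        (pivot Ψ e d)⁻¹ := by
      rw [h, add_sub_cancel_right, mul_inv_cancel_right₀ (pivot_ne_zero he d)]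
    rw [hcd]
    exact B.mul_mem (B.sub_mem (hF d) hlow) hpivotB

end Field

end HironakaDivision

theorem stmt3_general {n p q : ℕ} {A : Type} [CommRing A] [IsDomain A]
    (L : Fin n → ℝ) (hL : ∀ i, 0 < L i)
    (Φ : Fin q → (Fin p → MvPowerSeries (Fin n) A))
    (e : Fin q → Idx n p) (he : ∀ i, IsExpOf L (Φ i) (e i))
    (B : Subring (FractionRing A))
    (hBA : ∀ a : A, algebraMap A (FractionRing A) a ∈ B)
    (hBinv : ∀ i, (algebraMap A (FractionRing A)
      (MvPowerSeries.coeff (e i).1 (Φ i (e i).2)))⁻¹ ∈ B)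
    (F : Fin p → MvPowerSeries (Fin n) (FractionRing A))
    (hF : ∀ d : Idx n p, MvPowerSeries.coeff d.1 (F d.2) ∈ B) :
    ∃ (Q : Fin q → MvPowerSeries (Fin n) (FractionRing A))
      (R : Fin p → MvPowerSeries (Fin n) (FractionRing A)),
      -- Q_i ∈ B⟦x⟧ and R ∈ B⟦x⟧ᵖ
      (∀ i α, MvPowerSeries.coeff α (Q i) ∈ B) ∧
      (∀ d : Idx n p, MvPowerSeries.coeff d.1 (R d.2) ∈ B) ∧
      -- F = Σ Q_i Φ_i + R
      (∀ j, F j = (∑ i, Q i * MvPowerSeries.map (algebraMap A (FractionRing A)) (Φ i j))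
        + R j) ∧
      -- (α_i, j_i) + supp Q_i ⊆ Δ_i
      (∀ i, ∀ β : Fin n →₀ ℕ, MvPowerSeries.coeff β (Q i) ≠ 0 →
        ((e i).1 + β, (e i).2) ∈ Delta e i) ∧
      -- supp R ⊆ Δ
      suppV R ⊆ DeltaC e ∧
      -- moreover: (α_i,j_i) + exp Q_i ≥ exp F and exp R ≥ exp F
      (∀ dF : Idx n p, IsExpOf L F dF →
        (∀ i, ∀ β : Fin n →₀ ℕ, MvPowerSeries.coeff β (Q i) ≠ 0 →
          idxLE L dF ((e i).1 + β, (e i).2)) ∧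
        (∀ d ∈ suppV R, idxLE L dF d)) ∧
      -- uniqueness
      (∀ (Q' : Fin q → MvPowerSeries (Fin n) (FractionRing A))
         (R' : Fin p → MvPowerSeries (Fin n) (FractionRing A)),
        (∀ i α, MvPowerSeries.coeff α (Q' i) ∈ B) →
        (∀ d : Idx n p, MvPowerSeries.coeff d.1 (R' d.2) ∈ B) →
        (∀ j, F j = (∑ i, Q' i *
          MvPowerSeries.map (algebraMap A (FractionRing A)) (Φ i j)) + R' j) →
        (∀ i, ∀ β : Fin n →₀ ℕ, MvPowerSeries.coeff β (Q' i) ≠ 0 →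
          ((e i).1 + β, (e i).2) ∈ Delta e i) →
        suppV R' ⊆ DeltaC e →
        Q' = Q ∧ R' = R) := by
  open HironakaDivision in
  have he' : ∀ i, IsExpOf L (fun j => MvPowerSeries.map (algebraMap A (FractionRing A)) (Φ i j))
      (e i) := fun i => (he i).map (IsFractionRing.injective A _)
  obtain ⟨c, hcF⟩ := exists_expand_eq hL he' F
  have hcB := mem_of_expand_eq hL he' B (fun i j α => hBA _) hBinv hF hcF
  refine ⟨quot e c, rem e c, coeff_quot_mem hcB, fun d => coeff_rem_mem hcB d.1 d.2,
    fun j => (congrFun hcF j).symm, fun i β h => (coeff_quot_ne_zero_iff.1 h).1,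
    fun d h => (mem_suppV_rem_iff.1 h).1,
    fun dF hdF => ⟨fun i β h => idxLE_of_expand_eq hL he' hcF hdF (coeff_quot_ne_zero_iff.1 h).2,
      fun d h => idxLE_of_expand_eq hL he' hcF hdF (mem_suppV_rem_iff.1 h).2⟩,
    fun Q' R' _ _ hF' hQ' hR' => ?_⟩
  obtain rfl : ofQuotRem e Q' R' = c := expand_injective hL he' <| by
    rw [hcF]
    funext j
    simp only [expand, quot_ofQuotRem R' hQ', rem_ofQuotRem Q' hR', hF' j]
  exact ⟨funext fun i => (quot_ofQuotRem R' hQ' i).symm,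
    funext fun j => (rem_ofQuotRem Q' hR' j).symm⟩

/-- **Hironaka's formal division algorithm.** -/
theorem stmt3 {n p q : ℕ} {A : Type} [CommRing A] [IsDomain A]
    (L : Fin n → ℝ) (hL : ∀ i, 0 < L i)
    (Φ : Fin q → (Fin p → MvPowerSeries (Fin n) A)) (hΦ : ∀ i, Φ i ≠ 0)
    (e : Fin q → Idx n p) (he : ∀ i, IsExpOf L (Φ i) (e i))
    (B : Subring (FractionRing A))
    (hBA : ∀ a : A, algebraMap A (FractionRing A) a ∈ B)
    (hBinv : ∀ i, (algebraMap A (FractionRing A)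
      (MvPowerSeries.coeff (e i).1 (Φ i (e i).2)))⁻¹ ∈ B)
    (F : Fin p → MvPowerSeries (Fin n) (FractionRing A))
    (hF : ∀ d : Idx n p, MvPowerSeries.coeff d.1 (F d.2) ∈ B) :
    ∃ (Q : Fin q → MvPowerSeries (Fin n) (FractionRing A))
      (R : Fin p → MvPowerSeries (Fin n) (FractionRing A)),
      -- Q_i ∈ B⟦x⟧ and R ∈ B⟦x⟧ᵖ
      (∀ i α, MvPowerSeries.coeff α (Q i) ∈ B) ∧
      (∀ d : Idx n p, MvPowerSeries.coeff d.1 (R d.2) ∈ B) ∧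
      -- F = Σ Q_i Φ_i + R
      (∀ j, F j = (∑ i, Q i * MvPowerSeries.map (algebraMap A (FractionRing A)) (Φ i j))
        + R j) ∧
      -- (α_i, j_i) + supp Q_i ⊆ Δ_i
      (∀ i, ∀ β : Fin n →₀ ℕ, MvPowerSeries.coeff β (Q i) ≠ 0 →
        ((e i).1 + β, (e i).2) ∈ Delta e i) ∧
      -- supp R ⊆ Δ
      suppV R ⊆ DeltaC e ∧
      -- moreover: (α_i,j_i) + exp Q_i ≥ exp F and exp R ≥ exp F
      (∀ dF : Idx n p, IsExpOf L F dF →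
        (∀ i, ∀ β : Fin n →₀ ℕ, MvPowerSeries.coeff β (Q i) ≠ 0 →
          idxLE L dF ((e i).1 + β, (e i).2)) ∧
        (∀ d ∈ suppV R, idxLE L dF d)) ∧
      -- uniqueness
      (∀ (Q' : Fin q → MvPowerSeries (Fin n) (FractionRing A))
         (R' : Fin p → MvPowerSeries (Fin n) (FractionRing A)),
        (∀ i α, MvPowerSeries.coeff α (Q' i) ∈ B) →
        (∀ d : Idx n p, MvPowerSeries.coeff d.1 (R' d.2) ∈ B) →
        (∀ j, F j = (∑ i, Q' i *
          MvPowerSeries.map (algebraMap A (FractionRing A)) (Φ i j)) + R' j) →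
        (∀ i, ∀ β : Fin n →₀ ℕ, MvPowerSeries.coeff β (Q' i) ≠ 0 →
          ((e i).1 + β, (e i).2) ∈ Delta e i) →
        suppV R' ⊆ DeltaC e →
        Q' = Q ∧ R' = R) :=
  stmt3_general L hL Φ e he B hBA hBinv F hF
end

section
/- (Borel's lemma with parameter.) Let Λ be a C^m submanifold of ℝⁿ and let F(a,x) = Σ_{|α|≤m} f_α(a)x^α/α! ∈ C⁰(Λ)[x] be a polynomial of degree ≤ m in x with continuous coefficients on Λ. Then F is a C^m Whitney field on Λ if and only if the truncation F^{m−1}(a,x) = Σ_{|α|≤m−1} f_α(a)x^α/α! has C¹ coefficients on Λ and, for all a ∈ Λ and all u ∈ T_aΛ (the tangent space of Λ at a), D_{a,u}F^{m−1}(a,x) = D_{x,u}F(a,x), where D_{a,u} denotes the directional derivative with respect to the parameter a in the direction u, and D_{x,u} denotes the formal directional derivative with respect to x in the direction u. -/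
open Classical

/-- Total degree `|α|` of a multiindex. -/
def mdeg {n : ℕ} (α : Fin n → ℕ) : ℕ := ∑ i, α i

/-- Factorial `α!` of a multiindex. -/
def mfact {n : ℕ} (α : Fin n → ℕ) : ℕ := ∏ i, (α i).factorial

/-- Monomial `x^α`. -/
def mpow {n : ℕ} (x : Fin n → ℝ) (α : Fin n → ℕ) : ℝ := ∏ i, x i ^ α i

/-- The (finite) set of multiindices of total degree `≤ k`. -/
def midx (n k : ℕ) : Finset (Fin n → ℕ) :=
  (Finset.Iic fun _ : Fin n => k).filter fun β => mdeg β ≤ k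

/-- First-order partial derivative in the `i`-th coordinate direction. -/
noncomputable def pd {n : ℕ} (i : Fin n) (f : (Fin n → ℝ) → ℝ) : (Fin n → ℝ) → ℝ :=
  fun x => fderiv ℝ f x (Pi.single i 1)

/-- The partial derivative `∂^{|α|}f/∂x^α`. -/
noncomputable def pdm {n : ℕ} (α : Fin n → ℕ) (f : (Fin n → ℝ) → ℝ) : (Fin n → ℝ) → ℝ :=
  ((List.finRange n).foldr (fun i g => (pd i)^[α i] ∘ g) id) f

/-- A family `(f_α)_{|α| ≤ m}` of functions on `E` is a `C^m`-Whitney field on `E`: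
the coefficients are continuous on `E` and, for all `|α| ≤ m`,
`(∂^α F)(a,0) − (∂^α F)(b,a−b) = o(|a−b|^{m−|α|})` as `a, b ∈ E` tend to a point of `E`,
where `F(a,x) = Σ_{|α|≤m} f_α(a) x^α/α!` and `∂` is formal differentiation in `x`. -/
def IsWhitneyField {n : ℕ} (m : ℕ) (E : Set (Fin n → ℝ))
    (f : (Fin n → ℕ) → (Fin n → ℝ) → ℝ) : Prop :=
  (∀ α, mdeg α ≤ m → ContinuousOn (f α) E) ∧
  ∀ α, mdeg α ≤ m → ∀ c ∈ E, ∀ ε > (0:ℝ), ∃ δ > (0:ℝ), ∀ a ∈ E, ∀ b ∈ E,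
    dist a c < δ → dist b c < δ →
    |f α a - ∑ β ∈ midx n (m - mdeg α), f (α + β) b * mpow (a - b) β / (mfact β : ℝ)|
      ≤ ε * dist a b ^ (m - mdeg α)

/-- `M` is, near `x`, a `C^k` submanifold of dimension `d` of `ι → ℝ`: there is a local `C^k`
parametrization of `M` by an open subset of `ℝ^d`, with a `C^k` left inverse defined on an
ambient neighbourhood of `x`. -/
def IsSubmanifoldAt {ι : Type} [Fintype ι] (k : WithTop ℕ∞) (M : Set (ι → ℝ)) (d : ℕ)
    (x : ι → ℝ) : Prop :=
  ∃ (U : Set (ι → ℝ)) (W : Set (Fin d → ℝ))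
    (param : (Fin d → ℝ) → (ι → ℝ)) (chart : (ι → ℝ) → (Fin d → ℝ)),
    IsOpen U ∧ x ∈ U ∧ IsOpen W ∧
    ContDiffOn ℝ k param W ∧ ContDiffOn ℝ k chart U ∧
    param '' W = M ∩ U ∧ (∀ w ∈ W, chart (param w) = w) ∧ (∀ y ∈ M ∩ U, param (chart y) = y)

/-- `M` is a `C^k` submanifold of `ι → ℝ` of pure dimension `d`. -/
def IsSubmanifoldOfDim {ι : Type} [Fintype ι] (k : WithTop ℕ∞) (M : Set (ι → ℝ)) (d : ℕ) : Prop :=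
  ∀ x ∈ M, IsSubmanifoldAt k M d x

/-- `M` is a `C^k` submanifold of `ι → ℝ` (components may have different dimensions). -/
def IsSubmanifold {ι : Type} [Fintype ι] (k : WithTop ℕ∞) (M : Set (ι → ℝ)) : Prop :=
  ∀ x ∈ M, ∃ d : ℕ, IsSubmanifoldAt k M d x

/-!
If `F` is a Whitney field, the Whitney condition at `a` says that `f_α` agrees to order `> 1`
along `Λ` with the polynomial `(∂^α F)(a, · - a)`, whose differential at `a` is
`u ↦ Σᵢ uᵢ f_{α+eᵢ}(a)`; this differential depends continuously on `a`.

Conversely, argue by induction on `m - |α|`. Two points `a, b` of `Λ` near `c` are joined by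
a path in `Λ`, tangent to `Λ`, of speed `O(|a - b|)`: the image under a local parametrization
of the segment between their charts. Along it, the derivative of the remainder
`f_α - (∂^α F)(b, · - b)` is a combination, with the velocity as coefficients, of the
remainders of the `f_{α+eᵢ}`, which are `o(|a - b|^k)` by induction; the mean value
inequality makes the remainder of `f_α` an `o(|a - b|^(k+1))`.
-/

open Set Filter Topology

section Multiindex

variable {n : ℕ}

lemma mem_midx {k : ℕ} {β : Fin n → ℕ} : β ∈ midx n k ↔ mdeg β ≤ k := by
  refine ⟨fun h => (Finset.mem_filter.1 h).2, fun h => Finset.mem_filter.2 ⟨?_, h⟩⟩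
  exact Finset.mem_Iic.2 fun i => (Finset.single_le_sum (fun j _ => Nat.zero_le (β j))
    (Finset.mem_univ i)).trans h

lemma mdeg_add (α β : Fin n → ℕ) : mdeg (α + β) = mdeg α + mdeg β := by
  simp [mdeg, Finset.sum_add_distrib]

lemma mdeg_single (i : Fin n) : mdeg (Pi.single i 1) = 1 := by
  simp [mdeg]

lemma mfact_cast_ne_zero (β : Fin n → ℕ) : (mfact β : ℝ) ≠ 0 := by
  simp [mfact, Finset.prod_ne_zero_iff, Nat.factorial_ne_zero]

lemma mfact_add_single (β : Fin n → ℕ) (i : Fin n) :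
    mfact (β + Pi.single i 1) = mfact β * (β i + 1) := by
  simp only [mfact, ← Finset.mul_prod_erase _ _ (Finset.mem_univ i)]
  rw [Finset.prod_congr rfl fun j hj => by
    rw [Pi.add_apply, Pi.single_eq_of_ne (Finset.ne_of_mem_erase hj), add_zero]]
  rw [Pi.add_apply, Pi.single_eq_same, Nat.factorial_succ]
  ring

lemma mpow_zero_right (x : Fin n → ℝ) : mpow x 0 = 1 := by simp [mpow]

lemma mpow_zero_left {β : Fin n → ℕ} (hβ : β ≠ 0) : mpow 0 β = 0 := by
  obtain ⟨i, hi⟩ := Function.ne_iff.1 hβ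
  exact Finset.prod_eq_zero (Finset.mem_univ i) (by simp [zero_pow hi])

lemma mpow_sub_single (x : Fin n → ℝ) (β : Fin n → ℕ) (i : Fin n) :
    mpow x (β - Pi.single i 1) = x i ^ (β i - 1) * ∏ j ∈ Finset.univ.erase i, x j ^ β j := by
  simp only [mpow, ← Finset.mul_prod_erase _ _ (Finset.mem_univ i)]
  rw [Finset.prod_congr rfl fun j hj => by
    rw [Pi.sub_apply, Pi.single_eq_of_ne (Finset.ne_of_mem_erase hj), Nat.sub_zero]]
  simp

/-- Reindex by `β ↦ β + eᵢ`; the terms with `βᵢ = 0` vanish. -/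
lemma sum_midx_succ_mul_mpow_sub_single (k : ℕ) (i : Fin n) (g : (Fin n → ℕ) → ℝ)
    (z : Fin n → ℝ) :
    ∑ β ∈ midx n (k + 1), g β / mfact β * (β i * mpow z (β - Pi.single i 1))
      = ∑ β ∈ midx n k, g (β + Pi.single i 1) * mpow z β / mfact β := by
  have himage : (midx n (k + 1)).filter (fun β => β i ≠ 0)
      = (midx n k).image (· + Pi.single i 1) := by
    ext β
    simp only [Finset.mem_filter, Finset.mem_image, mem_midx]
    constructor
    · rintro ⟨hβ, hβi⟩
      have hadd : β - Pi.single i 1 + Pi.single i 1 = β := by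
        ext j
        rcases eq_or_ne j i with rfl | hj
        · simp only [Pi.add_apply, Pi.sub_apply, Pi.single_eq_same]
          omega
        · simp [hj]
      refine ⟨β - Pi.single i 1, ?_, hadd⟩
      have := mdeg_add (β - Pi.single i 1) (Pi.single i 1)
      rw [hadd, mdeg_single] at this
      omega
    · rintro ⟨β, hβ, rfl⟩
      simp [mdeg_add, mdeg_single, hβ]
  rw [← Finset.sum_filter_of_ne (p := fun β => β i ≠ 0) fun β _ h hβi => h (by simp [hβi]),
    himage, Finset.sum_image fun β _ γ _ h => add_right_cancel h]
  refine Finset.sum_congr rfl fun β _ => ?_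
  have hsub : β + Pi.single i 1 - Pi.single i 1 = β := by ext j; simp
  rw [hsub, mfact_add_single]
  have := mfact_cast_ne_zero β
  simp only [Nat.cast_mul, Nat.cast_add, Nat.cast_one, Pi.add_apply, Pi.single_eq_same]
  field_simp

end Multiindex

section Taylor

variable {n : ℕ}

/-- `(∂^α F)(b, x - b)` for `F` truncated at order `|α| + k`. -/
noncomputable def taylorAt (f : (Fin n → ℕ) → (Fin n → ℝ) → ℝ) (α : Fin n → ℕ) (k : ℕ)
    (b x : Fin n → ℝ) : ℝ :=
  ∑ β ∈ midx n k, f (α + β) b * mpow (x - b) β / mfact β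

lemma taylorAt_self (f : (Fin n → ℕ) → (Fin n → ℝ) → ℝ) (α : Fin n → ℕ) (k : ℕ)
    (b : Fin n → ℝ) : taylorAt f α k b b = f α b := by
  rw [taylorAt, Finset.sum_eq_single 0 (fun β _ hβ => by simp [mpow_zero_left hβ])
    (fun h => absurd (mem_midx.2 (by simp [mdeg])) h)]
  simp [mpow_zero_right, mfact]

lemma taylorAt_zero (f : (Fin n → ℕ) → (Fin n → ℝ) → ℝ) (α : Fin n → ℕ) (b x : Fin n → ℝ) :
    taylorAt f α 0 b x = f α b := by
  have hzero : ∀ β ∈ midx n 0, β = 0 := fun β hβ => funext fun i =>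
    Finset.sum_eq_zero_iff.1 (Nat.le_zero.1 (mem_midx.1 hβ)) i (Finset.mem_univ i)
  rw [taylorAt, Finset.sum_eq_single 0 (fun β hβ h0 => absurd (hzero β hβ) h0)
    (fun h => absurd (mem_midx.2 (by simp [mdeg])) h)]
  simp [mpow_zero_right, mfact]

lemma hasFDerivAt_mpow (β : Fin n → ℕ) (x : Fin n → ℝ) :
    HasFDerivAt (mpow · β)
      (∑ i, (β i * mpow x (β - Pi.single i 1)) •
        ContinuousLinearMap.proj (R := ℝ) (φ := fun _ : Fin n => ℝ) i) x := by
  have h := HasFDerivAt.finsetProd (u := Finset.univ) (x := x)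
    fun i _ => (hasFDerivAt_apply (𝕜 := ℝ) i x).pow (β i)
  refine h.congr_fderiv (Finset.sum_congr rfl fun i _ => ?_)
  rw [smul_smul, mpow_sub_single, nsmul_eq_mul]
  ring_nf

lemma hasFDerivAt_taylorAt (f : (Fin n → ℕ) → (Fin n → ℝ) → ℝ) (α : Fin n → ℕ) (k : ℕ)
    (b x : Fin n → ℝ) :
    HasFDerivAt (taylorAt f α (k + 1) b)
      (∑ i, taylorAt f (α + Pi.single i 1) k b x •
        ContinuousLinearMap.proj (R := ℝ) (φ := fun _ : Fin n => ℝ) i) x := by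
  have hterm : ∀ β ∈ midx n (k + 1),
      HasFDerivAt (fun y => f (α + β) b * mpow (y - b) β / mfact β)
        ((f (α + β) b / mfact β) • ∑ i, (β i * mpow (x - b) (β - Pi.single i 1)) •
          ContinuousLinearMap.proj (R := ℝ) (φ := fun _ : Fin n => ℝ) i) x := fun β _ => by
    have h := ((hasFDerivAt_mpow β (x - b)).comp x ((hasFDerivAt_id x).sub_const b)).const_mul
      (f (α + β) b / mfact β)
    rw [ContinuousLinearMap.comp_id] at h
    refine h.congr_of_eventuallyEq (Eventually.of_forall fun y => ?_)
    simp only [Function.comp_apply, id]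
    ring
  refine (HasFDerivAt.fun_sum hterm).congr_fderiv ?_
  simp only [Finset.smul_sum, smul_smul]
  rw [Finset.sum_comm]
  refine Finset.sum_congr rfl fun i _ => ?_
  have h := sum_midx_succ_mul_mpow_sub_single k i (fun β => f (α + β) b) (x - b)
  rw [← Finset.sum_smul, h, taylorAt]
  simp only [add_assoc, add_comm (Pi.single i 1)]

end Taylor

lemma contDiffOn_one_of_hasFDerivWithinAt {𝕜 E F : Type*} [NontriviallyNormedField 𝕜]
    [NormedAddCommGroup E] [NormedSpace 𝕜 E] [NormedAddCommGroup F] [NormedSpace 𝕜 F]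
    {f : E → F} {f' : E → E →L[𝕜] F} {s : Set E}
    (hf : ∀ x ∈ s, HasFDerivWithinAt f (f' x) s x) (hf' : ContinuousOn f' s) :
    ContDiffOn 𝕜 1 f s := by
  rw [← zero_add (1 : WithTop ℕ∞), contDiffOn_succ_iff_hasFDerivWithinAt (by simp)]
  intro x hx
  refine ⟨s, ?_, by simp, f', hf, contDiffOn_zero.2 hf'⟩
  rw [insert_eq_of_mem hx]
  exact self_mem_nhdsWithin

namespace IsWhitneyField

variable {n m : ℕ} {s : Set (Fin n → ℝ)} {f : (Fin n → ℕ) → (Fin n → ℝ) → ℝ}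

lemma hasFDerivWithinAt (hW : IsWhitneyField m s f) {α : Fin n → ℕ}
    (hα : mdeg α + 1 ≤ m) {a : Fin n → ℝ} (ha : a ∈ s) :
    HasFDerivWithinAt (f α) (∑ i, f (α + Pi.single i 1) a •
      ContinuousLinearMap.proj (R := ℝ) (φ := fun _ : Fin n => ℝ) i) s a := by
  obtain ⟨k, hk⟩ : ∃ k, m - mdeg α = k + 1 := ⟨m - mdeg α - 1, by omega⟩
  have hT := hasFDerivAt_taylorAt f α k a a
  simp only [taylorAt_self] at hT
  have hrem : (fun x => f α x - taylorAt f α (k + 1) a x) =o[𝓝[s] a] (fun x => x - a) := by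
    refine Asymptotics.isLittleO_iff.2 fun ε hε => ?_
    obtain ⟨δ, hδ, hδW⟩ := hW.2 α (by omega) a ha ε hε
    filter_upwards [self_mem_nhdsWithin,
      nhdsWithin_le_nhds (Metric.ball_mem_nhds a (lt_min hδ one_pos))] with x hx hxa
    have hxa' := Metric.mem_ball.1 hxa
    have h := hδW x hx a ha (hxa'.trans_le (min_le_left _ _)) (by simpa using hδ)
    rw [hk] at h
    rw [Real.norm_eq_abs, ← dist_eq_norm]
    calc |f α x - taylorAt f α (k + 1) a x| ≤ ε * dist x a ^ (k + 1) := h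
      _ ≤ ε * dist x a := by
        gcongr
        exact pow_le_of_le_one dist_nonneg (hxa'.le.trans (min_le_right _ _)) (by omega)
  refine .of_isLittleO <| (hrem.add hT.hasFDerivWithinAt.isLittleO).congr_left fun x => ?_
  rw [taylorAt_self]
  ring

lemma contDiffOn (hW : IsWhitneyField m s f) {α : Fin n → ℕ} (hα : mdeg α + 1 ≤ m) :
    ContDiffOn ℝ 1 (f α) s := by
  refine contDiffOn_one_of_hasFDerivWithinAt (fun a ha => hW.hasFDerivWithinAt hα ha) ?_
  refine continuousOn_finsetSum _ fun i _ => (hW.1 _ ?_).smul continuousOn_const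
  rwa [mdeg_add, mdeg_single]

lemma fderivWithin_apply (hW : IsWhitneyField m s f) {α : Fin n → ℕ}
    (hα : mdeg α + 1 ≤ m) {a : Fin n → ℝ} (ha : a ∈ s) {u : Fin n → ℝ}
    (hu : u ∈ tangentConeAt ℝ s a) :
    fderivWithin ℝ (f α) s a u = ∑ i, u i * f (α + Pi.single i 1) a := by
  have h := hW.hasFDerivWithinAt hα ha
  rw [h.differentiableWithinAt.hasFDerivWithinAt.unique_on h hu]
  simp [mul_comm]

end IsWhitneyField

section TangentPaths

variable {E : Type*} [NormedAddCommGroup E] [NormedSpace ℝ E]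

def HasTangentPathsAt (s : Set E) (c : E) (C : ℝ) : Prop :=
  ∀ η > 0, ∃ δ > 0, ∀ a ∈ s, ∀ b ∈ s, dist a c < δ → dist b c < δ →
    ∃ γ γ' : ℝ → E, γ 0 = b ∧ γ 1 = a ∧ ∀ t ∈ Icc (0 : ℝ) 1, dist (γ t) c < η ∧ γ t ∈ s ∧
      HasDerivWithinAt γ (γ' t) (Icc 0 1) t ∧ γ' t ∈ tangentConeAt ℝ s (γ t) ∧
      ‖γ' t‖ ≤ C * dist a b

lemma HasFDerivAt.mem_tangentConeAt_of_mapsTo {F : Type*} [NormedAddCommGroup F]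
    [NormedSpace ℝ F] {g : F → E} {g' : F →L[ℝ] E} {w : F} {W : Set F} {s : Set E}
    (hg : HasFDerivAt g g' w) (hW : W ∈ 𝓝 w) (hmaps : MapsTo g W s) (v : F) :
    g' v ∈ tangentConeAt ℝ s (g w) :=
  tangentConeAt_mono hmaps.image_subset <|
    hg.hasFDerivWithinAt.mapsTo_tangent_cone (by simp [tangentConeAt_of_mem_nhds hW])

end TangentPaths

/-- Join `a` and `b` by the image under the parametrization of the segment between their
charts; Lipschitz constants of the chart and of the parametrization bound its speed. -/
lemma IsSubmanifoldAt.exists_hasTangentPathsAt {ι : Type} [Fintype ι] {k : WithTop ℕ∞}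
    {M : Set (ι → ℝ)} {d : ℕ} {c : ι → ℝ} (h : IsSubmanifoldAt k M d c) (hk : 1 ≤ k)
    (hc : c ∈ M) : ∃ C, 0 ≤ C ∧ HasTangentPathsAt M c C := by
  obtain ⟨U, W, param, chart, hU, hcU, hW, hparam, hchart, himg, hli, hri⟩ := h
  have hmaps : MapsTo param W M := fun w hw => (himg ▸ mem_image_of_mem param hw).1
  obtain ⟨w₀, hw₀, rfl⟩ : c ∈ param '' W := himg ▸ ⟨hc, hcU⟩
  obtain ⟨Kc, tc, htc, hlipc⟩ :=
    ((hchart.of_le hk).contDiffAt (hU.mem_nhds hcU)).exists_lipschitzOnWith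
  obtain ⟨Kp, tp, htp, hlipp⟩ :=
    ((hparam.of_le hk).contDiffAt (hW.mem_nhds hw₀)).exists_lipschitzOnWith
  obtain ⟨ρ, hρ, hρsub⟩ := Metric.mem_nhds_iff.1 (inter_mem htp (hW.mem_nhds hw₀))
  obtain ⟨r, hr, hrsub⟩ := Metric.mem_nhds_iff.1 (inter_mem htc (hU.mem_nhds hcU))
  refine ⟨Kp * Kc, by positivity, fun η hη => ?_⟩
  set ρ' := min ρ (η / (Kp + 1))
  have hρ' : 0 < ρ' := by positivity
  refine ⟨min r (ρ' / (Kc + 1)), by positivity, fun a ha b hb hac hbc => ?_⟩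
  have hnear : ∀ x ∈ M, dist x (param w₀) < min r (ρ' / (Kc + 1)) →
      x ∈ tc ∧ x ∈ U ∧ chart x ∈ Metric.ball w₀ ρ' := by
    intro x hx hxc
    have hxr := hrsub (Metric.mem_ball.2 (hxc.trans_le (min_le_left _ _)))
    refine ⟨hxr.1, hxr.2, ?_⟩
    rw [Metric.mem_ball, ← hli w₀ hw₀]
    calc dist (chart x) (chart (param w₀))
        ≤ Kc * dist x (param w₀) := hlipc.dist_le_mul x hxr.1 _ (mem_of_mem_nhds htc)
      _ ≤ Kc * (ρ' / (Kc + 1)) := by gcongr; exact hxc.le.trans (min_le_right _ _)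
      _ < ρ' := by
        rw [← mul_div_assoc, div_lt_iff₀ (by positivity)]
        nlinarith
  obtain ⟨hat, haU, hab⟩ := hnear a ha hac
  obtain ⟨hbt, hbU, hbb⟩ := hnear b hb hbc
  set v := chart a - chart b
  set σ : ℝ → Fin d → ℝ := fun t => chart b + t • v
  refine ⟨fun t => param (σ t), fun t => fderiv ℝ param (σ t) v,
    by simpa [σ] using hri b ⟨hb, hbU⟩, by simpa [σ, v] using hri a ⟨ha, haU⟩, fun t ht => ?_⟩
  have hσρ' : σ t ∈ Metric.ball w₀ ρ' := (convex_ball w₀ ρ').add_smul_sub_mem hbb hab ht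
  have hσρ : σ t ∈ Metric.ball w₀ ρ := Metric.ball_subset_ball (min_le_left _ _) hσρ'
  have hσW : σ t ∈ W := (hρsub hσρ).2
  have hdiff : HasFDerivAt param (fderiv ℝ param (σ t)) (σ t) :=
    ((((hparam.of_le hk).differentiableOn one_ne_zero) _ hσW).differentiableAt
      (hW.mem_nhds hσW)).hasFDerivAt
  refine ⟨?_, hmaps hσW, ?_, hdiff.mem_tangentConeAt_of_mapsTo (hW.mem_nhds hσW) hmaps v, ?_⟩
  · calc dist (param (σ t)) (param w₀)
        ≤ Kp * dist (σ t) w₀ := hlipp.dist_le_mul _ (hρsub hσρ).1 _ (mem_of_mem_nhds htp)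
      _ ≤ Kp * (η / (Kp + 1)) := by
        gcongr
        exact (Metric.mem_ball.1 hσρ').le.trans (min_le_right _ _)
      _ < η := by
        rw [← mul_div_assoc, div_lt_iff₀ (by positivity)]
        nlinarith
  · have hσ : HasDerivAt σ v t := by
      simpa [σ] using ((hasDerivAt_id t).smul_const v).const_add (chart b)
    exact (hdiff.comp_hasDerivAt t hσ).hasDerivWithinAt
  · have hnorm : ‖fderiv ℝ param (σ t)‖ ≤ Kp :=
      norm_fderiv_le_of_lipschitzOn ℝ (Metric.isOpen_ball.mem_nhds hσρ)
        (hlipp.mono fun y hy => (hρsub hy).1)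
    have hv : ‖v‖ ≤ Kc * dist a b := by
      rw [← dist_eq_norm]
      exact hlipc.dist_le_mul a hat b hbt
    calc ‖fderiv ℝ param (σ t) v‖ ≤ ‖fderiv ℝ param (σ t)‖ * ‖v‖ :=
          (fderiv ℝ param _).le_opNorm v
      _ ≤ Kp * (Kc * dist a b) := by gcongr
      _ = Kp * Kc * dist a b := by ring

def WhitneyEstimateAt {n : ℕ} (m j : ℕ) (s : Set (Fin n → ℝ)) (c : Fin n → ℝ)
    (f : (Fin n → ℕ) → (Fin n → ℝ) → ℝ) : Prop :=
  ∀ ε > (0 : ℝ), ∃ δ > (0 : ℝ), ∀ a ∈ s, ∀ b ∈ s, dist a c < δ → dist b c < δ →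
    ∀ α, mdeg α + j = m → |f α a - taylorAt f α j b a| ≤ ε * dist a b ^ j

section Estimate

variable {n m : ℕ} {s : Set (Fin n → ℝ)} {c : Fin n → ℝ} {f : (Fin n → ℕ) → (Fin n → ℝ) → ℝ}

/-- Along a path tangent to `s`, the derivative of the remainder of `f α` is a combination of
the remainders of the `f (α + eᵢ)`; conclude by the mean value inequality. -/
lemma abs_sub_taylorAt_succ_le {α : Fin n → ℕ} {j : ℕ} {a b : Fin n → ℝ}
    {γ γ' : ℝ → Fin n → ℝ} {K ε : ℝ} (hdiff : DifferentiableOn ℝ (f α) s)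
    (hder : ∀ x ∈ s, ∀ u ∈ tangentConeAt ℝ s x,
      fderivWithin ℝ (f α) s x u = ∑ i, u i * f (α + Pi.single i 1) x)
    (hγ0 : γ 0 = b) (hγ1 : γ 1 = a)
    (hγ : ∀ t ∈ Icc (0 : ℝ) 1, γ t ∈ s ∧ HasDerivWithinAt γ (γ' t) (Icc 0 1) t ∧
      γ' t ∈ tangentConeAt ℝ s (γ t) ∧ ‖γ' t‖ ≤ K)
    (hrem : ∀ t ∈ Icc (0 : ℝ) 1, ∀ i,
      |f (α + Pi.single i 1) (γ t) - taylorAt f (α + Pi.single i 1) j b (γ t)| ≤ ε) :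
    |f α a - taylorAt f α (j + 1) b a| ≤ n * K * ε := by
  set g' : ℝ → ℝ := fun t => ∑ i, γ' t i *
    (f (α + Pi.single i 1) (γ t) - taylorAt f (α + Pi.single i 1) j b (γ t))
  have hg : ∀ t ∈ Icc (0 : ℝ) 1, HasDerivWithinAt
      (fun t => f α (γ t) - taylorAt f α (j + 1) b (γ t)) (g' t) (Icc 0 1) t := by
    intro t ht
    obtain ⟨hγs, hγd, hγ'tan, -⟩ := hγ t ht
    have h1 := (hdiff _ hγs).hasFDerivWithinAt.comp_hasDerivWithinAt t hγd
      fun τ hτ => (hγ τ hτ).1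
    have h2 := (hasFDerivAt_taylorAt f α j b (γ t)).comp_hasDerivWithinAt t hγd
    refine (h1.sub h2).congr_deriv ?_
    rw [hder _ hγs _ hγ'tan]
    simp [g', mul_sub, Finset.sum_sub_distrib, mul_comm]
  have hbound : ∀ t ∈ Ico (0 : ℝ) 1, ‖g' t‖ ≤ n * K * ε := by
    intro t ht
    have ht' := Ico_subset_Icc_self ht
    have hK := (hγ t ht').2.2.2
    calc ‖g' t‖ ≤ ∑ _i : Fin n, K * ε := by
          refine (norm_sum_le _ _).trans (Finset.sum_le_sum fun i _ => ?_)
          rw [norm_mul, Real.norm_eq_abs]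
          exact mul_le_mul ((norm_le_pi_norm _ i).trans hK) (hrem t ht' i) (abs_nonneg _)
            ((norm_nonneg _).trans hK)
      _ = n * K * ε := by simp [mul_assoc]
  simpa [hγ0, hγ1, taylorAt_self] using norm_image_sub_le_of_norm_deriv_le_segment_01' hg hbound

lemma whitneyEstimateAt_zero (hcont : ∀ α, mdeg α ≤ m → ContinuousOn (f α) s) (hc : c ∈ s) :
    WhitneyEstimateAt m 0 s c f := by
  intro ε hε
  have hnear : ∀ᶠ x in 𝓝[s] c, ∀ α ∈ midx n m, dist (f α x) (f α c) < ε / 2 :=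
    (Finset.eventually_all _).2 fun α hα =>
      Metric.tendsto_nhds.1 (hcont α (mem_midx.1 hα) c hc) _ (half_pos hε)
  obtain ⟨δ, hδ, hδnear⟩ := Metric.eventually_nhds_iff.1 (eventually_nhdsWithin_iff.1 hnear)
  refine ⟨δ, hδ, fun a ha b hb hac hbc α hα => ?_⟩
  have hαm : α ∈ midx n m := mem_midx.2 (by omega)
  rw [taylorAt_zero, pow_zero, mul_one, ← Real.dist_eq]
  linarith [dist_triangle_right (f α a) (f α b) (f α c), hδnear hac ha α hαm,
    hδnear hbc hb α hαm]

lemma WhitneyEstimateAt.succ {j : ℕ} {C : ℝ} (h : WhitneyEstimateAt m j s c f) (hC : 0 ≤ C)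
    (hpath : HasTangentPathsAt s c C)
    (hdiff : ∀ α, mdeg α + 1 ≤ m → DifferentiableOn ℝ (f α) s)
    (hder : ∀ a ∈ s, ∀ u ∈ tangentConeAt ℝ s a, ∀ α, mdeg α + 1 ≤ m →
      fderivWithin ℝ (f α) s a u = ∑ i, u i * f (α + Pi.single i 1) a) :
    WhitneyEstimateAt m (j + 1) s c f := by
  intro ε hε
  set ε₀ := ε / (n * C ^ (j + 1) + 1)
  obtain ⟨δ₀, hδ₀, hrem⟩ := h ε₀ (by positivity)
  obtain ⟨δ, hδ, hpaths⟩ := hpath δ₀ hδ₀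
  refine ⟨δ, hδ, fun a ha b hb hac hbc α hα => ?_⟩
  obtain ⟨γ, γ', hγ0, hγ1, hγ⟩ := hpaths a ha b hb hac hbc
  have hγb : ∀ t ∈ Icc (0 : ℝ) 1, dist (γ t) b ≤ C * dist a b := by
    intro t ht
    have := norm_image_sub_le_of_norm_deriv_le_segment' (fun t ht => (hγ t ht).2.2.1)
      (fun t ht => (hγ t (Ico_subset_Icc_self ht)).2.2.2.2) t ht
    rw [hγ0, sub_zero] at this
    rw [dist_eq_norm]
    exact this.trans (mul_le_of_le_one_right (by positivity) ht.2)
  have hbc₀ : dist b c < δ₀ := hγ0 ▸ (hγ 0 (left_mem_Icc.2 zero_le_one)).1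
  have hremγ : ∀ t ∈ Icc (0 : ℝ) 1, ∀ i,
      |f (α + Pi.single i 1) (γ t) - taylorAt f (α + Pi.single i 1) j b (γ t)|
        ≤ ε₀ * (C * dist a b) ^ j := fun t ht i =>
    calc _ ≤ ε₀ * dist (γ t) b ^ j := hrem (γ t) (hγ t ht).2.1 b hb (hγ t ht).1 hbc₀
          (α + Pi.single i 1) (by rw [mdeg_add, mdeg_single]; omega)
      _ ≤ ε₀ * (C * dist a b) ^ j := by gcongr; exact hγb t ht
  calc |f α a - taylorAt f α (j + 1) b a|
      ≤ n * (C * dist a b) * (ε₀ * (C * dist a b) ^ j) :=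
        abs_sub_taylorAt_succ_le (hdiff α (by omega))
          (fun x hx u hu => hder x hx u hu α (by omega)) hγ0 hγ1 (fun t ht => (hγ t ht).2) hremγ
    _ = n * C ^ (j + 1) * ε₀ * dist a b ^ (j + 1) := by ring
    _ ≤ ε * dist a b ^ (j + 1) := by
      gcongr
      rw [mul_div_left_comm]
      exact mul_le_of_le_one_right hε.le ((div_le_one (by positivity)).2 (by linarith))

lemma IsSubmanifold.whitneyEstimateAt (hs : IsSubmanifold (m : WithTop ℕ∞) s) (hc : c ∈ s)
    (hcont : ∀ α, mdeg α ≤ m → ContinuousOn (f α) s)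
    (hdiff : ∀ α, mdeg α + 1 ≤ m → ContDiffOn ℝ 1 (f α) s)
    (hder : ∀ a ∈ s, ∀ u ∈ tangentConeAt ℝ s a, ∀ α, mdeg α + 1 ≤ m →
      fderivWithin ℝ (f α) s a u = ∑ i, u i * f (α + Pi.single i 1) a) :
    ∀ j ≤ m, WhitneyEstimateAt m j s c f := by
  intro j hj
  induction j with
  | zero => exact whitneyEstimateAt_zero hcont hc
  | succ j ih =>
    obtain ⟨d, hd⟩ := hs c hc
    obtain ⟨C, hC, hpath⟩ :=
      hd.exists_hasTangentPathsAt (by exact_mod_cast (by omega : 1 ≤ m)) hc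
    exact (ih (by omega)).succ hC hpath
      (fun α hα => (hdiff α hα).differentiableOn one_ne_zero) hder

end Estimate

/-- **Borel's lemma with parameter.** Let `Λ` be a `C^m` submanifold of `ℝⁿ`
and let `F(a,x) = Σ_{|α|≤m} f_α(a)x^α/α!` have continuous coefficients on `Λ`. Then `F` is a
`C^m` Whitney field on `Λ` if and only if the coefficients of the truncation `F^{m−1}` are
`C¹` on `Λ` and, for all `a ∈ Λ` and `u ∈ T_aΛ`, `D_{a,u}F^{m−1}(a,x) = D_{x,u}F(a,x)`
(equivalently, coefficientwise: the directional derivative of `f_α` along `Λ` at `a` in the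
direction `u` equals `Σ_i u_i f_{α+e_i}(a)` for all `|α| ≤ m−1`). -/
theorem stmt10 {n : ℕ} (m : ℕ) (Λ : Set (Fin n → ℝ))
    (hΛ : IsSubmanifold (m : WithTop ℕ∞) Λ)
    (f : (Fin n → ℕ) → (Fin n → ℝ) → ℝ)
    (hcont : ∀ α, mdeg α ≤ m → ContinuousOn (f α) Λ) :
    IsWhitneyField m Λ f ↔
      ((∀ α, mdeg α + 1 ≤ m → ContDiffOn ℝ 1 (f α) Λ) ∧
        ∀ a ∈ Λ, ∀ u ∈ tangentConeAt ℝ Λ a, ∀ α, mdeg α + 1 ≤ m →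
          fderivWithin ℝ (f α) Λ a u = ∑ i, u i * f (α + Pi.single i 1) a) := by
  refine ⟨fun hW => ⟨fun α hα => hW.contDiffOn hα,
    fun a ha u hu α hα => hW.fderivWithin_apply hα ha hu⟩, fun ⟨hdiff, hder⟩ => ⟨hcont, ?_⟩⟩
  intro α hα c hc ε hε
  obtain ⟨δ, hδ, h⟩ := hΛ.whitneyEstimateAt hc hcont hdiff hder (m - mdeg α) (Nat.sub_le _ _) ε hε
  exact ⟨δ, hδ, fun a ha b hb hac hbc => h a ha b hb hac hbc α (by omega)⟩
end
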